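/- arXiv:2109.08854 — 5 statements merged into one kernel-verified Lean document; each statement's English description precedes it below -/
import Mathlib

section
/- An FSA S is not strongly periodically detectable if and only if at least one of the following holds: (1) there exist γ∈𝓛(S) and x∈M(S,γ) such that |M(S,γ)|>1 and there is a transition sequence x→^{s1}x'→^{s2}x' in S for some s1∈(T_uo)*, s2∈(T_uo)^+, x'∈X; (2) there exist label sequences α,β∈Σ* with αβ∈𝓛(S), |β|>0, M(S,α)=M(S,αβ), and |M(S,αβ̄)|>1 for every prefix β̄ of β. -/
/-- A finite-state automaton (FSA) `S = (X, T, X0, δ, Σ, ℓ)`: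
states `X`, events `T`, outputs `O` (the alphabet Σ), initial states `init`,
transition relation `delta`, and labeling function `label` where `none` encodes ε. -/
structure FSA (X T O : Type) where
  init : Set X
  delta : X → T → X → Prop
  label : T → Option O

/-- Composed events of the (ε-extended) self-composition: pairs of observable
events with the same label, unobservable events on the left/right component,
and the added ε event. -/
inductive CEvent (T : Type) where
  | both : T → T → CEvent T
  | left : T → CEvent T
  | right : T → CEvent T
  | eps : CEvent T

namespace FSA

variable {X T O : Type}

/-- Extension of `delta` to finite event sequences: `x →^s x'`. -/
def Run (M : FSA X T O) : X → List T → X → Prop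
  | x, [], x' => x = x'
  | x, t :: s, x' => ∃ y, M.delta x t y ∧ Run M y s x'

/-- The label sequence `ℓ(s)` of a finite event sequence. -/
def labelSeq (M : FSA X T O) (s : List T) : List O :=
  s.filterMap M.label

/-- Membership in `L^ω(S)`: infinite event sequences generated from some initial state. -/
def InLomega (M : FSA X T O) (s : ℕ → T) : Prop :=
  ∃ x : ℕ → X, x 0 ∈ M.init ∧ ∀ i, M.delta (x i) (s i) (x (i + 1))

/-- `s'` is a finite prefix of the infinite sequence `s`. -/
def IsPrefixOf (s' : List T) (s : ℕ → T) : Prop :=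
  ∀ i : Fin s'.length, s'.get i = s i

/-- The current-state estimate `M(S,σ)`. -/
def est (M : FSA X T O) (σ : List O) : Set X :=
  {x | ∃ x0 ∈ M.init, ∃ s : List T, M.labelSeq s = σ ∧ M.Run x0 s x}

/-- Strong periodic detectability (SPD). -/
def SPD (M : FSA X T O) : Prop :=
  ∃ k : ℕ, 0 < k ∧ ∀ s : ℕ → T, M.InLomega s → ∀ s' : List T, IsPrefixOf s' s →
    ∃ s'' : List T, (M.labelSeq s'').length < k ∧ IsPrefixOf (s' ++ s'') s ∧
      (M.est (M.labelSeq (s' ++ s''))).ncard = 1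

/-- Strong periodic D-detectability with respect to `Tspec`. -/
def SPDD (M : FSA X T O) (Tspec : Set (X × X)) : Prop :=
  ∃ k : ℕ, 0 < k ∧ ∀ s : ℕ → T, M.InLomega s → ∀ s' : List T, IsPrefixOf s' s →
    ∃ s'' : List T, (M.labelSeq s'').length < k ∧ IsPrefixOf (s' ++ s'') s ∧
      (M.est (M.labelSeq (s' ++ s'')) ×ˢ M.est (M.labelSeq (s' ++ s''))) ∩ Tspec = ∅

/-- An unobservable transition sequence `x →^s x'` (all events labeled ε). -/
def UnobsRun (M : FSA X T O) (x : X) (s : List T) (x' : X) : Prop :=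
  M.Run x s x' ∧ ∀ t ∈ s, M.label t = none

/-- Unobservable reach `UR` of a set of states. -/
def UR (M : FSA X T O) (q : Set X) : Set X :=
  {x' | ∃ x ∈ q, ∃ s : List T, M.UnobsRun x s x'}

/-- Observable reach `Reach_σ` of a set of states. -/
def ReachO (M : FSA X T O) (σ : O) (q : Set X) : Set X :=
  {x' | ∃ x ∈ q, ∃ t : T, M.delta x t x' ∧ M.label t = some σ}

/-- Initial state `M(S,ε) = UR(X0)` of the observer/detector. -/
def obsInit (M : FSA X T O) : Set X := M.UR M.init

/-- Observer transition `δ_obs(q,σ) = UR(Reach_σ(q))` (defined when nonempty). -/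
def obsTrans (M : FSA X T O) (q : Set X) (σ : O) (q' : Set X) : Prop :=
  q' = M.UR (M.ReachO σ q) ∧ q'.Nonempty

/-- Sequences of observer transitions. -/
def ObsRun (M : FSA X T O) : Set X → List O → Set X → Prop
  | q, [], q' => q = q'
  | q, σ :: w, q' => ∃ q1, M.obsTrans q σ q1 ∧ ObsRun M q1 w q'

/-- Reachable states of the observer `S_obs`. -/
def ObsReachable (M : FSA X T O) (q : Set X) : Prop :=
  ∃ w : List O, M.ObsRun M.obsInit w q

/-- Detector transition relation `δ_det`. -/
def detTrans (M : FSA X T O) (q : Set X) (σ : O) (q' : Set X) : Prop :=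
  (1 < (M.UR (M.ReachO σ q)).ncard ∧ q' ⊆ M.UR (M.ReachO σ q) ∧ q'.ncard = 2) ∨
  ((M.UR (M.ReachO σ q)).ncard = 1 ∧ q' = M.UR (M.ReachO σ q))

/-- Sequences of detector transitions. -/
def DetRun (M : FSA X T O) : Set X → List O → Set X → Prop
  | q, [], q' => q = q'
  | q, σ :: w, q' => ∃ q1, M.detTrans q σ q1 ∧ DetRun M q1 w q'

/-- Reachable states of the detector `S_det`. -/
def DetReachable (M : FSA X T O) (q : Set X) : Prop :=
  ∃ w : List O, M.DetRun M.obsInit w q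

/-- The label of a composed event. -/
def cLabel (M : FSA X T O) : CEvent T → Option O
  | CEvent.both t _ => M.label t
  | CEvent.left _ => none
  | CEvent.right _ => none
  | CEvent.eps => none

/-- The label sequence of a sequence of composed events. -/
def ccLabelSeq (M : FSA X T O) (s : List (CEvent T)) : List O :=
  s.filterMap M.cLabel

/-- Transition relation `δ'` of the self-composition `CC_A(S)`. -/
def ccTrans (M : FSA X T O) : X × X → CEvent T → X × X → Prop
  | p, CEvent.both t t', p' =>
      M.delta p.1 t p'.1 ∧ M.delta p.2 t' p'.2 ∧
      ∃ σ : O, M.label t = some σ ∧ M.label t' = some σ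
  | p, CEvent.left t, p' => M.delta p.1 t p'.1 ∧ M.label t = none ∧ p.2 = p'.2
  | p, CEvent.right t, p' => p.1 = p'.1 ∧ M.label t = none ∧ M.delta p.2 t p'.2
  | _, CEvent.eps, _ => False

/-- Transition relation of the ε-extended self-composition `CC^ε_A(S)`:
all transitions of `CC_A(S)` plus, for `x1 ≠ x2`, the added ε-transitions
`((x1,x2),ε,(x1,x1))` and `((x1,x2),ε,(x2,x2))` under the stated conditions. -/
def ccEpsTrans (M : FSA X T O) (p : X × X) (e : CEvent T) (p' : X × X) : Prop :=
  M.ccTrans p e p' ∨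
  (e = CEvent.eps ∧ p.1 ≠ p.2 ∧ (p' = (p.1, p.1) ∨ p' = (p.2, p.2)) ∧
    ∃ (t' : CEvent T) (r : X × X),
      M.ccTrans p' t' r ∧ ∀ t'' : CEvent T, ¬ M.ccTrans p t'' r)

/-- Sequences of transitions of `CC^ε_A(S)`. -/
def CCRun (M : FSA X T O) : X × X → List (CEvent T) → X × X → Prop
  | p, [], p' => p = p'
  | p, e :: s, p' => ∃ r, M.ccEpsTrans p e r ∧ CCRun M r s p'

/-- Reachable states of `CC^ε_A(S)` (from `X0 × X0`). -/
def CCReachable (M : FSA X T O) (p : X × X) : Prop :=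
  ∃ p0 : X × X, p0.1 ∈ M.init ∧ p0.2 ∈ M.init ∧ ∃ s : List (CEvent T), M.CCRun p0 s p

/-- A state is reachable in `S`. -/
def StateReachable (M : FSA X T O) (x : X) : Prop :=
  ∃ x0 ∈ M.init, ∃ s : List T, M.Run x0 s x

/-- Deadlock-freeness. -/
def DeadlockFree (M : FSA X T O) : Prop :=
  ∀ x : X, M.StateReachable x → ∃ (t : T) (x' : X), M.delta x t x'

/-- Divergence-freeness (promptness): no reachable unobservable transition cycle. -/
def DivergenceFree (M : FSA X T O) : Prop :=
  ∀ x : X, M.StateReachable x → ∀ s : List T, s ≠ [] →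
    (∀ t ∈ s, M.label t = none) → ¬ M.Run x s x

end FSA

/-!
Suppose some run, after a prefix, produces only ambiguous estimates. If from then on it observes
fewer than `2 ^ |X|` labels, it is eventually unobservable and, `X` being finite, revisits a state:
an unobservable cycle reachable from an ambiguous estimate, condition (1)
(`AmbiguousUnobservableCycle`). Otherwise two of the estimates reached after the next
`0, 1, …, 2 ^ |X|` labels coincide, and the labels in between form a cycle of the observer through
ambiguous estimates, condition (2) (`AmbiguousObserverCycle`).

Conversely, either condition yields a lasso (a finite run followed by a cycle repeated forever)
along which every estimate after the stem is ambiguous. Under condition (2) the cycle is found by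
following `β`-labelled runs backwards inside the finite set `M(S, α) = M(S, αβ)`.
-/

theorem List.exists_prefix_filterMap_eq {α β : Type*} {f : α → Option β} :
    ∀ {l : List α} {u : List β}, u <+: l.filterMap f → ∃ l', l' <+: l ∧ l'.filterMap f = u
  | [], u, h => ⟨[], List.prefix_rfl, (List.prefix_nil.1 h).symm⟩
  | a :: l, u, h => by
    rcases u with _ | ⟨b, u⟩
    · exact ⟨[], List.nil_prefix, rfl⟩
    rcases ha : f a with _ | c
    · rw [List.filterMap_cons_none ha] at h
      obtain ⟨l', hl', hu⟩ := List.exists_prefix_filterMap_eq h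
      exact ⟨a :: l', List.cons_prefix_cons.2 ⟨rfl, hl'⟩,
        by rw [List.filterMap_cons_none ha, hu]⟩
    · rw [List.filterMap_cons_some ha, List.cons_prefix_cons] at h
      obtain ⟨rfl, h⟩ := h
      obtain ⟨l', hl', hu⟩ := List.exists_prefix_filterMap_eq h
      exact ⟨a :: l', List.cons_prefix_cons.2 ⟨rfl, hl'⟩,
        by rw [List.filterMap_cons_some ha, hu]⟩

theorem Relation.exists_transGen_self {α : Type*} [Finite α] [Nonempty α] {r : α → α → Prop}
    (h : ∀ a, ∃ b, r b a) : ∃ a, Relation.TransGen r a a := by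
  by_contra! hirr
  have : Std.Irrefl (Relation.TransGen r) := ⟨hirr⟩
  obtain ⟨a, -, hmin⟩ := (Finite.wellFounded_of_trans_of_irrefl (Relation.TransGen r)).has_min
    Set.univ Set.univ_nonempty
  obtain ⟨b, hba⟩ := h a
  exact hmin b trivial (.single hba)

theorem Stream'.take_append_drop_take {α : Type*} (s : Stream' α) {n m : ℕ} (h : n ≤ m) :
    s.take n ++ (s.take m).drop n = s.take m := by
  conv_rhs => rw [← List.take_append_drop n (s.take m)]
  rw [Stream'.take_take, min_eq_right h]

namespace FSA

variable {X T O : Type} (M : FSA X T O)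

def AmbiguousUnobservableCycle : Prop :=
  ∃ (γ : List O) (x : X), x ∈ M.est γ ∧ 1 < (M.est γ).ncard ∧
    ∃ (x' : X) (s1 s2 : List T), M.UnobsRun x s1 x' ∧ s2 ≠ [] ∧ M.UnobsRun x' s2 x'

def AmbiguousObserverCycle : Prop :=
  ∃ α β : List O, (M.est (α ++ β)).Nonempty ∧ β ≠ [] ∧ M.est α = M.est (α ++ β) ∧
    ∀ β' : List O, β' <+: β → 1 < (M.est (α ++ β')).ncard

theorem run_append {x y : X} {u v : List T} :
    M.Run x (u ++ v) y ↔ ∃ z, M.Run x u z ∧ M.Run z v y := by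
  induction u generalizing x with
  | nil => simp [Run]
  | cons t u ih =>
    simp only [List.cons_append, Run, ih]
    exact ⟨fun ⟨w, hw, z, hz, hy⟩ => ⟨z, ⟨w, hw, hz⟩, hy⟩,
      fun ⟨z, ⟨w, hw, hz⟩, hy⟩ => ⟨w, hw, z, hz, hy⟩⟩

theorem labelSeq_append (u v : List T) : M.labelSeq (u ++ v) = M.labelSeq u ++ M.labelSeq v :=
  List.filterMap_append

theorem labelSeq_flatten_replicate (n : ℕ) (d : List T) :
    M.labelSeq (List.replicate n d).flatten = (List.replicate n (M.labelSeq d)).flatten := by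
  rw [labelSeq, List.filterMap_flatten, List.map_replicate, labelSeq]

theorem mem_est_append {σ τ : List O} {x : X} :
    x ∈ M.est (σ ++ τ) ↔ ∃ y ∈ M.est σ, ∃ e, M.labelSeq e = τ ∧ M.Run y e x := by
  constructor
  · rintro ⟨x₀, h₀, e, he, hrun⟩
    obtain ⟨e₁, e₂, rfl, he₁, he₂⟩ := List.filterMap_eq_append_iff.1 he
    obtain ⟨y, hy, hyx⟩ := M.run_append.1 hrun
    exact ⟨y, ⟨x₀, h₀, e₁, he₁, hy⟩, e₂, he₂, hyx⟩
  · rintro ⟨y, ⟨x₀, h₀, e₁, rfl, hy⟩, e₂, rfl, hyx⟩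
    exact ⟨x₀, h₀, e₁ ++ e₂, M.labelSeq_append e₁ e₂, M.run_append.2 ⟨y, hy, hyx⟩⟩

theorem est_append_congr {σ σ' : List O} (h : M.est σ = M.est σ') (τ : List O) :
    M.est (σ ++ τ) = M.est (σ' ++ τ) := by
  ext x
  simp only [mem_est_append, h]

theorem est_nonempty_of_prefix {σ τ : List O} (h : σ <+: τ) (hτ : (M.est τ).Nonempty) :
    (M.est σ).Nonempty := by
  obtain ⟨ρ, rfl⟩ := h
  obtain ⟨x, hx⟩ := hτ
  obtain ⟨y, hy, -⟩ := M.mem_est_append.1 hx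
  exact ⟨y, hy⟩

theorem isPrefixOf_iff {l : List T} {s : Stream' T} : IsPrefixOf l s ↔ s.take l.length = l := by
  constructor
  · intro h
    refine List.ext_getElem (Stream'.length_take _ _) fun i h₁ h₂ => ?_
    rw [Stream'.take_get]
    exact (h ⟨i, h₂⟩).symm
  · intro h i
    have hi : (s.take l.length)[i.1]? = l[i.1]? := by rw [h]
    rw [Stream'.getElem?_take i.2, List.getElem?_eq_getElem i.2] at hi
    exact (Option.some_inj.1 hi).symm

theorem isPrefixOf_of_prefix_take {l : List T} {s : Stream' T} {m : ℕ}
    (h : l <+: s.take m) : IsPrefixOf l s := by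
  rw [isPrefixOf_iff, List.prefix_iff_eq_take.1 h, Stream'.take_take,
    min_eq_right (by simpa using h.length_le), Stream'.length_take]

theorem run_take_drop {x : ℕ → X} {s : Stream' T}
    (hrun : ∀ i, M.delta (x i) (s i) (x (i + 1))) (a c : ℕ) :
    M.Run (x a) ((s.drop a).take c) (x (a + c)) := by
  induction c with
  | zero => rfl
  | succ c ih =>
    rw [Stream'.take_succ', run_append, Stream'.get_drop]
    exact ⟨x (a + c), ih, x (a + c + 1), hrun (a + c), rfl⟩

theorem unobsRun_take_drop {x : ℕ → X} {s : Stream' T}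
    (hrun : ∀ i, M.delta (x i) (s i) (x (i + 1))) {a : ℕ}
    (htail : ∀ i ≥ a, M.label (s i) = none) (c : ℕ) :
    M.UnobsRun (x a) ((s.drop a).take c) (x (a + c)) := by
  refine ⟨M.run_take_drop hrun a c, fun t ht => ?_⟩
  obtain ⟨i, hi, rfl⟩ := List.mem_iff_getElem.1 ht
  rw [Stream'.take_get, Stream'.get_drop]
  exact htail _ (Nat.le_add_right a i)

theorem mem_est_labelSeq_take {x : ℕ → X} {s : Stream' T} (hx₀ : x 0 ∈ M.init)
    (hrun : ∀ i, M.delta (x i) (s i) (x (i + 1))) (m : ℕ) :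
    x m ∈ M.est (M.labelSeq (s.take m)) :=
  ⟨x 0, hx₀, _, rfl, by simpa using M.run_take_drop hrun 0 m⟩

theorem exists_inLomega_lasso {x₀ z : X} {u d : List T} (h₀ : x₀ ∈ M.init) (hu : M.Run x₀ u z)
    (hd : M.Run z d z) (hne : d ≠ []) :
    ∃ s : Stream' T, M.InLomega s ∧ ∀ m, ∃ j, s.take m <+: u ++ (List.replicate j d).flatten := by
  -- At `(y, r)` the run is in state `y` and still has to follow `r` to get back to `z`.
  let C := {p : X × List T // p.2 ≠ [] ∧ M.Run p.1 p.2 z}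
  have step : ∀ p : C, ∃ q : T × C, M.delta p.1.1 q.1 q.2.1.1 ∧
      ∃ a, p.1.2 ++ (List.replicate a d).flatten = q.1 :: q.2.1.2 := by
    rintro ⟨⟨y, _ | ⟨t, r⟩⟩, hr, y', hy', hrun⟩
    · exact absurd rfl hr
    rcases r with _ | ⟨t', r⟩
    · obtain rfl : y' = z := hrun
      exact ⟨(t, ⟨(y', d), hne, hd⟩), hy', 1, by simp⟩
    · exact ⟨(t, ⟨(y', t' :: r), List.cons_ne_nil _ _, hrun⟩), hy', 0, by simp⟩
  choose next hnext using step
  let p : ℕ → C := fun n =>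
    (fun q => (next q).2)^[n] ⟨(x₀, u ++ d), by simp [hne], M.run_append.2 ⟨z, hu, hd⟩⟩
  have hp : ∀ n, p (n + 1) = (next (p n)).2 := fun n => Function.iterate_succ_apply' _ _ _
  obtain ⟨s, hs⟩ : ∃ s : Stream' T, ∀ n, s n = (next (p n)).1 := ⟨_, fun _ => rfl⟩
  refine ⟨s, ⟨fun n => (p n).1.1, h₀, fun n => ?_⟩, fun m => ?_⟩
  · show M.delta (p n).1.1 (s n) (p (n + 1)).1.1
    rw [hs, hp]
    exact (hnext (p n)).1
  · suffices h : ∃ j, s.take m ++ (p m).1.2 = u ++ (List.replicate j d).flatten by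
      obtain ⟨j, hj⟩ := h
      exact ⟨j, (p m).1.2, hj⟩
    induction m with
    | zero => exact ⟨1, by simp [p, Stream'.take_zero]⟩
    | succ m ih =>
      obtain ⟨j, hj⟩ := ih
      obtain ⟨a, ha⟩ := (hnext (p m)).2
      refine ⟨j + a, ?_⟩
      rw [Stream'.take_succ', List.replicate_add, List.flatten_append, ← List.append_assoc, ← hj,
        List.append_assoc, List.append_assoc, ha, hp, Stream'.get, hs]
      rfl

theorem not_spd_of_lasso {x₀ z : X} {w v d : List T} (h₀ : x₀ ∈ M.init)
    (hwv : M.Run x₀ (w ++ v) z) (hd : M.Run z d z) (hne : d ≠ [])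
    (hamb : ∀ j l, l <+: v ++ (List.replicate j d).flatten →
      (M.est (M.labelSeq w ++ M.labelSeq l)).ncard ≠ 1) :
    ¬ M.SPD := by
  rintro ⟨k, -, hk⟩
  obtain ⟨s, hs, hlasso⟩ := M.exists_inLomega_lasso h₀ hwv hd hne
  have hext : ∀ l, IsPrefixOf (w ++ l) s → ∃ j, l <+: v ++ (List.replicate j d).flatten := by
    intro l hl
    obtain ⟨j, hj⟩ := hlasso (w ++ l).length
    rw [isPrefixOf_iff.1 hl, List.append_assoc, List.prefix_append_right_inj] at hj
    exact ⟨j, hj⟩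
  have hw : IsPrefixOf w s := by
    obtain ⟨j, hj⟩ := hlasso w.length
    rw [List.append_assoc] at hj
    exact isPrefixOf_iff.2 ((List.prefix_of_prefix_length_le hj (List.prefix_append _ _)
      (by simp [Stream'.length_take])).eq_of_length (Stream'.length_take _ _))
  obtain ⟨s'', -, hs'', hcard⟩ := hk s hs w hw
  obtain ⟨j, hj⟩ := hext s'' hs''
  exact hamb j s'' hj (by rwa [labelSeq_append] at hcard)

theorem not_spd_of_ambiguousUnobservableCycle (h : M.AmbiguousUnobservableCycle) : ¬ M.SPD := by
  obtain ⟨-, x, ⟨x₀, h₀, w, rfl, hw⟩, hcard, x', s₁, s₂, h₁, hs₂, h₂⟩ := h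
  refine M.not_spd_of_lasso h₀ (M.run_append.2 ⟨x, hw, h₁.1⟩) h₂.1 hs₂ fun j l hl => ?_
  have hunobs : M.labelSeq l = [] := by
    refine List.filterMap_eq_nil_iff.2 fun t ht => ?_
    rcases List.mem_append.1 (hl.subset ht) with ht | ht
    · exact h₁.2 t ht
    · obtain ⟨d, hd, htd⟩ := List.mem_flatten.1 ht
      rw [List.eq_of_mem_replicate hd] at htd
      exact h₂.2 t htd
  rw [hunobs, List.append_nil]
  exact hcard.ne'

theorem one_lt_ncard_est_of_prefix_flatten_replicate {α β : List O}
    (heq : M.est α = M.est (α ++ β))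
    (hamb : ∀ β' : List O, β' <+: β → 1 < (M.est (α ++ β')).ncard) :
    ∀ (n : ℕ) (w : List O), w <+: (List.replicate n β).flatten → 1 < (M.est (α ++ w)).ncard
  | 0, w, hw => by
    obtain rfl : w = [] := by simpa using hw
    exact hamb [] List.nil_prefix
  | n + 1, w, hw => by
    rw [List.replicate_succ, List.flatten_cons] at hw
    rcases le_total w.length β.length with hle | hle
    · exact hamb w (List.prefix_of_prefix_length_le hw (List.prefix_append _ _) hle)
    · obtain ⟨w', rfl⟩ := List.prefix_of_prefix_length_le (List.prefix_append _ _) hw hle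
      rw [← List.append_assoc, ← M.est_append_congr heq]
      exact one_lt_ncard_est_of_prefix_flatten_replicate heq hamb n w'
        ((List.prefix_append_right_inj β).1 hw)

theorem exists_run_of_transGen {β : List O} {y z : X}
    (h : Relation.TransGen (fun y z => ∃ e, M.labelSeq e = β ∧ M.Run y e z) y z) :
    ∃ d c, 0 < c ∧ M.Run y d z ∧ M.labelSeq d = (List.replicate c β).flatten := by
  induction h with
  | single h =>
    obtain ⟨e, he, hrun⟩ := h
    exact ⟨e, 1, one_pos, hrun, by simp [he]⟩
  | tail _ h ih =>
    obtain ⟨d, c, hc, hd, hdl⟩ := ih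
    obtain ⟨e, he, hrun⟩ := h
    refine ⟨d ++ e, c + 1, c.succ_pos, M.run_append.2 ⟨_, hd, hrun⟩, ?_⟩
    rw [labelSeq_append, hdl, he, List.replicate_succ', List.flatten_append,
      List.flatten_singleton]

theorem exists_cycle_of_est_eq [Finite X] {α β : List O} (heq : M.est α = M.est (α ++ β))
    (hne : (M.est (α ++ β)).Nonempty) :
    ∃ z ∈ M.est α, ∃ d c, 0 < c ∧ M.Run z d z ∧
      M.labelSeq d = (List.replicate c β).flatten := by
  have : Nonempty (M.est α) := (heq ▸ hne).to_subtype
  obtain ⟨⟨z, hz⟩, hzz⟩ := Relation.exists_transGen_self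
    (r := fun y z : M.est α => ∃ e, M.labelSeq e = β ∧ M.Run y e z) fun ⟨z, hz⟩ => by
      rw [heq, mem_est_append] at hz
      obtain ⟨y, hy, hyz⟩ := hz
      exact ⟨⟨y, hy⟩, hyz⟩
  exact ⟨z, hz, M.exists_run_of_transGen
    (Relation.TransGen.lift (p := fun y z => ∃ e, M.labelSeq e = β ∧ M.Run y e z) Subtype.val
      (fun _ _ h => h) _ _ hzz)⟩

theorem not_spd_of_ambiguousObserverCycle [Finite X] (h : M.AmbiguousObserverCycle) :
    ¬ M.SPD := by
  obtain ⟨α, β, hne, hβ, heq, hamb⟩ := h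
  obtain ⟨z, ⟨x₀, h₀, w, rfl, hw⟩, d, c, hc, hd, hdl⟩ := M.exists_cycle_of_est_eq heq hne
  have hd_ne : d ≠ [] := by
    rintro rfl
    obtain ⟨c, rfl⟩ := Nat.exists_eq_add_one_of_ne_zero hc.ne'
    simp [labelSeq, List.replicate_succ, hβ] at hdl
  refine M.not_spd_of_lasso (v := []) h₀ (by rwa [List.append_nil]) hd hd_ne fun j l hl => ?_
  have hlabel : M.labelSeq l <+: (List.replicate (j * c) β).flatten := by
    have := hl.filterMap M.label
    rwa [List.nil_append, ← labelSeq, ← labelSeq, labelSeq_flatten_replicate, hdl,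
      ← List.map_replicate, ← List.flatten_flatten, List.flatten_replicate_replicate] at this
  exact (M.one_lt_ncard_est_of_prefix_flatten_replicate heq hamb _ _ hlabel).ne'

theorem ambiguousObserverCycle_of_est_take_eq [Finite X] {σ τ : List O} {i j : ℕ} (hij : i < j)
    (hj : j ≤ τ.length) (heq : M.est (σ ++ τ.take i) = M.est (σ ++ τ.take j))
    (hamb : ∀ k ≤ j, 1 < (M.est (σ ++ τ.take k)).ncard) : M.AmbiguousObserverCycle := by
  have hsplit : τ.take i ++ (τ.take j).drop i = τ.take j := by
    conv_rhs => rw [← List.take_append_drop i (τ.take j)]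
    rw [List.take_take, min_eq_left hij.le]
  have htake : ∀ β' : List O, β' <+: (τ.take j).drop i →
      τ.take i ++ β' = τ.take (i + β'.length) := by
    intro β' hβ'
    have h := (List.prefix_append_right_inj (τ.take i)).2 hβ'
    rw [hsplit] at h
    rw [List.prefix_iff_eq_take.1 (h.trans (List.take_prefix j τ)), List.length_append,
      List.length_take, min_eq_left (by omega)]
  refine ⟨σ ++ τ.take i, (τ.take j).drop i, ?_, ?_, ?_, fun β' hβ' => ?_⟩
  · rw [List.append_assoc, hsplit]
    exact Set.nonempty_of_ncard_ne_zero (one_pos.trans (hamb j le_rfl)).ne'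
  · rw [← List.length_pos_iff, List.length_drop, List.length_take]
    omega
  · rw [List.append_assoc, hsplit, heq]
  · rw [List.append_assoc, htake β' hβ']
    have := hβ'.length_le
    simp only [List.length_drop, List.length_take] at this
    exact hamb _ (by omega)

theorem exists_prefix_ncard_est_eq_one [Finite X] (h : ¬ M.AmbiguousObserverCycle)
    {σ τ : List O} (hτ : Nat.card (Set X) ≤ τ.length) (hne : (M.est (σ ++ τ)).Nonempty) :
    ∃ τ', τ' <+: τ ∧ τ'.length ≤ Nat.card (Set X) ∧ (M.est (σ ++ τ')).ncard = 1 := by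
  by_contra! hne1
  have hamb : ∀ k ≤ Nat.card (Set X), 1 < (M.est (σ ++ τ.take k)).ncard := by
    intro k hk
    have hpos := (Set.ncard_pos (Set.toFinite _)).2
      (M.est_nonempty_of_prefix ((List.prefix_append_right_inj σ).2 (List.take_prefix k τ)) hne)
    have := hne1 _ (List.take_prefix k τ) ((List.length_take_le _ _).trans hk)
    omega
  obtain ⟨i, hi, j, hj, hij, heq⟩ := Set.exists_ne_map_eq_of_ncard_lt_of_maps_to
    (s := Set.Iic (Nat.card (Set X))) (t := Set.univ) (f := fun k => M.est (σ ++ τ.take k))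
    (by simp) (fun _ _ => Set.mem_univ _)
  rcases hij.lt_or_gt with hij | hji
  · exact h (M.ambiguousObserverCycle_of_est_take_eq hij (hj.trans hτ) heq
      fun k hk => hamb k (hk.trans hj))
  · exact h (M.ambiguousObserverCycle_of_est_take_eq hji (hi.trans hτ) heq.symm
      fun k hk => hamb k (hk.trans hi))

theorem length_labelSeq_take_mono (s : Stream' T) {m m' : ℕ} (h : m ≤ m') :
    (M.labelSeq (s.take m)).length ≤ (M.labelSeq (s.take m')).length :=
  ((Stream'.take_prefix_take_left m m' s h).filterMap M.label).length_le

theorem length_labelSeq_take_succ (s : Stream' T) {m : ℕ} (h : M.label (s m) ≠ none) :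
    (M.labelSeq (s.take (m + 1))).length = (M.labelSeq (s.take m)).length + 1 := by
  obtain ⟨o, ho⟩ := Option.ne_none_iff_exists'.1 h
  rw [Stream'.take_succ', labelSeq_append]
  simp [labelSeq, Stream'.get, ho]

theorem exists_forall_ge_label_eq_none (s : Stream' T) {n B : ℕ}
    (hB : ∀ m ≥ n, (M.labelSeq (s.take m)).length ≤ B) :
    ∃ m₀ ≥ n, ∀ i ≥ m₀, M.label (s i) = none := by
  by_contra! hobs
  have hgrow : ∀ j, ∃ m ≥ n, j ≤ (M.labelSeq (s.take m)).length := by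
    intro j
    induction j with
    | zero => exact ⟨n, le_rfl, Nat.zero_le _⟩
    | succ j ih =>
      obtain ⟨m, hm, hj⟩ := ih
      obtain ⟨i, hi, hsi⟩ := hobs m hm
      refine ⟨i + 1, by omega, ?_⟩
      rw [M.length_labelSeq_take_succ s hsi]
      have := M.length_labelSeq_take_mono s hi
      omega
  obtain ⟨m, hm, hB'⟩ := hgrow (B + 1)
  have := hB m hm
  omega

theorem ncard_est_eq_one_of_unobservable_tail [Finite X] (h : ¬ M.AmbiguousUnobservableCycle)
    {x : ℕ → X} {s : Stream' T} (hx₀ : x 0 ∈ M.init)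
    (hrun : ∀ i, M.delta (x i) (s i) (x (i + 1))) {m : ℕ} (htail : ∀ i ≥ m, M.label (s i) = none) :
    (M.est (M.labelSeq (s.take m))).ncard = 1 := by
  obtain ⟨a, b, hab, hxab⟩ := Set.finite_univ.exists_lt_map_eq_of_forall_mem
    (f := fun i => x (m + i)) fun _ => Set.mem_univ _
  have hmem := M.mem_est_labelSeq_take hx₀ hrun m
  have hpos := (Set.ncard_pos (Set.toFinite _)).2 ⟨_, hmem⟩
  have : ¬ 1 < (M.est (M.labelSeq (s.take m))).ncard := fun hamb => by
    have hcycle :=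
      M.unobsRun_take_drop hrun (a := m + a) (fun i hi => htail i (by omega)) (b - a)
    rw [show m + a + (b - a) = m + b by omega, ← hxab] at hcycle
    refine h ⟨_, _, hmem, hamb, x (m + a), _, _, M.unobsRun_take_drop hrun htail a, ?_, hcycle⟩
    rw [← List.length_pos_iff, Stream'.length_take]
    omega
  omega

theorem exists_ncard_est_eq_one_of_observations [Finite X] (h : ¬ M.AmbiguousObserverCycle)
    {x : ℕ → X} {s : Stream' T} (hx₀ : x 0 ∈ M.init)
    (hrun : ∀ i, M.delta (x i) (s i) (x (i + 1))) {n m : ℕ} (hnm : n ≤ m)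
    (hlen : (M.labelSeq (s.take n)).length + Nat.card (Set X) ≤ (M.labelSeq (s.take m)).length) :
    ∃ s'', (M.labelSeq s'').length ≤ Nat.card (Set X) ∧ s.take n ++ s'' <+: s.take m ∧
      (M.est (M.labelSeq (s.take n ++ s''))).ncard = 1 := by
  have hsplit := Stream'.take_append_drop_take s hnm
  have hlab :
      M.labelSeq (s.take m) = M.labelSeq (s.take n) ++ M.labelSeq ((s.take m).drop n) := by
    rw [← labelSeq_append, hsplit]
  rw [hlab, List.length_append] at hlen
  obtain ⟨τ', hτ', hτ'len, hcard⟩ := M.exists_prefix_ncard_est_eq_one h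
    (τ := M.labelSeq ((s.take m).drop n)) (by omega)
    (by rw [← hlab]; exact ⟨_, M.mem_est_labelSeq_take hx₀ hrun m⟩)
  obtain ⟨s'', hs'', rfl⟩ := List.exists_prefix_filterMap_eq hτ'
  exact ⟨s'', hτ'len, hsplit ▸ (List.prefix_append_right_inj _).2 hs'',
    by rwa [labelSeq_append]⟩

theorem spd_of_not_ambiguous [Finite X] (h₁ : ¬ M.AmbiguousUnobservableCycle)
    (h₂ : ¬ M.AmbiguousObserverCycle) : M.SPD := by
  refine ⟨Nat.card (Set X) + 1, Nat.succ_pos _, fun (s : Stream' T) ⟨x, hx₀, hrun⟩ s' hs' => ?_⟩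
  obtain ⟨n, rfl⟩ : ∃ n, s' = s.take n := ⟨_, (isPrefixOf_iff.1 hs').symm⟩
  by_cases hobs : ∃ m ≥ n,
      (M.labelSeq (s.take n)).length + Nat.card (Set X) ≤ (M.labelSeq (s.take m)).length
  · obtain ⟨m, hnm, hlen⟩ := hobs
    obtain ⟨s'', hlen'', hpre, hcard⟩ :=
      M.exists_ncard_est_eq_one_of_observations h₂ hx₀ hrun hnm hlen
    exact ⟨s'', Nat.lt_succ_of_le hlen'', isPrefixOf_of_prefix_take hpre, hcard⟩
  · push Not at hobs
    obtain ⟨m, hnm, htail⟩ := M.exists_forall_ge_label_eq_none s fun m hm => (hobs m hm).le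
    have hsplit := Stream'.take_append_drop_take s hnm
    refine ⟨(s.take m).drop n, ?_, isPrefixOf_of_prefix_take (m := m) (by rw [hsplit]), ?_⟩
    · have := hobs m hnm
      rw [← hsplit, labelSeq_append, List.length_append] at this
      omega
    · rw [hsplit]
      exact M.ncard_est_eq_one_of_unobservable_tail h₁ hx₀ hrun htail

theorem not_spd_iff [Finite X] :
    ¬ M.SPD ↔ M.AmbiguousUnobservableCycle ∨ M.AmbiguousObserverCycle :=
  ⟨fun h => or_iff_not_and_not.2 fun ⟨h₁, h₂⟩ => h (M.spd_of_not_ambiguous h₁ h₂),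
    fun h => h.elim M.not_spd_of_ambiguousUnobservableCycle M.not_spd_of_ambiguousObserverCycle⟩

end FSA

theorem not_spd_iff_lang_general {X T O : Type} [Fintype X]
    (M : FSA X T O) :
    ¬ M.SPD ↔
      ((∃ (γ : List O) (x : X), x ∈ M.est γ ∧ 1 < (M.est γ).ncard ∧
          ∃ (x' : X) (s1 s2 : List T),
            M.UnobsRun x s1 x' ∧ s2 ≠ [] ∧ M.UnobsRun x' s2 x') ∨
       (∃ α β : List O, (M.est (α ++ β)).Nonempty ∧ β ≠ [] ∧
          M.est α = M.est (α ++ β) ∧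
          ∀ β' : List O, β' <+: β → 1 < (M.est (α ++ β')).ncard)) :=
  M.not_spd_iff

/-- `S` is not SPD iff (1) there are `γ ∈ 𝓛(S)` and `x ∈ M(S,γ)` with
`|M(S,γ)| > 1` and a transition sequence `x →^{s1} x' →^{s2} x'` with `s1 ∈ (T_uo)*`,
`s2 ∈ (T_uo)^+`, or (2) there are `α, β ∈ Σ*` with `αβ ∈ 𝓛(S)`, `|β| > 0`,
`M(S,α) = M(S,αβ)`, and `|M(S,αβ̄)| > 1` for every prefix `β̄` of `β`. -/
theorem not_spd_iff_lang {X T O : Type} [Fintype X] [Fintype T] [Fintype O]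
    (M : FSA X T O) :
    ¬ M.SPD ↔
      ((∃ (γ : List O) (x : X), x ∈ M.est γ ∧ 1 < (M.est γ).ncard ∧
          ∃ (x' : X) (s1 s2 : List T),
            M.UnobsRun x s1 x' ∧ s2 ≠ [] ∧ M.UnobsRun x' s2 x') ∨
       (∃ α β : List O, (M.est (α ++ β)).Nonempty ∧ β ≠ [] ∧
          M.est α = M.est (α ++ β) ∧
          ∀ β' : List O, β' <+: β → 1 < (M.est (α ++ β')).ncard)) :=
  not_spd_iff_lang_general M
end

section
/- Let S be an FSA with observer S_obs and detector S_det. For every transition (q,σ,q')∈δ_obs of the observer and for every nonempty subset q̄'⊆q' with |q̄'|=2 whenever |q'|≥2, there exists q̄⊆q with (q̄,σ,q̄')∈δ_det, where |q̄|=2 whenever |q|≥2. -/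
/-!
Each state of `UR(Reach_σ(q))` is reached from a single state of `q`, so the at most two states
of `q̄'` are reached from at most two states of `q`, which can be padded to a two-element subset
`q̄ ⊆ q` when `|q| ≥ 2`. If `|q'| ≥ 2` this gives the first kind of detector transition. Otherwise
`q' = q̄'` is a singleton, and `q̄' ⊆ UR(Reach_σ(q̄)) ⊆ UR(Reach_σ(q)) = q'` forces equality,
which is the second kind.
-/

namespace FSA

variable {X T O : Type} (M : FSA X T O)

theorem ReachO_mono (σ : O) : Monotone (M.ReachO σ) := by
  rintro s t hst x ⟨y, hy, e, hd, hl⟩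
  exact ⟨y, hst hy, e, hd, hl⟩

theorem UR_mono : Monotone M.UR := by
  rintro s t hst x ⟨y, hy, l, hr⟩
  exact ⟨y, hst hy, l, hr⟩

theorem UR_ReachO_mono (σ : O) {q r : Set X} (h : q ⊆ r) :
    M.UR (M.ReachO σ q) ⊆ M.UR (M.ReachO σ r) :=
  M.UR_mono (M.ReachO_mono σ h)

theorem exists_mem_of_mem_UR_ReachO {q : Set X} {σ : O} {a : X}
    (ha : a ∈ M.UR (M.ReachO σ q)) : ∃ x ∈ q, a ∈ M.UR (M.ReachO σ {x}) := by
  obtain ⟨y, ⟨x, hx, t, hd, hl⟩, s, hrun⟩ := ha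
  exact ⟨x, hx, y, ⟨x, rfl, t, hd, hl⟩, s, hrun⟩

theorem exists_subset_pair_subset_UR_ReachO {q : Set X} {σ : O} {a b : X}
    (hab : {a, b} ⊆ M.UR (M.ReachO σ q)) :
    ∃ qb ⊆ q, {a, b} ⊆ M.UR (M.ReachO σ qb) ∧ (2 ≤ q.ncard → qb.ncard = 2) := by
  obtain ⟨xa, hxa, ha⟩ := M.exists_mem_of_mem_UR_ReachO (hab (Set.mem_insert a {b}))
  obtain ⟨xb, hxb, hb⟩ := M.exists_mem_of_mem_UR_ReachO (hab (Set.mem_insert_of_mem a rfl))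
  have hsources : {xa, xb} ⊆ q := Set.insert_subset hxa (Set.singleton_subset_iff.mpr hxb)
  have hcover : {a, b} ⊆ M.UR (M.ReachO σ {xa, xb}) := by
    rw [Set.insert_subset_iff, Set.singleton_subset_iff]
    exact ⟨M.UR_ReachO_mono σ (by simp) ha, M.UR_ReachO_mono σ (by simp) hb⟩
  by_cases h2 : 2 ≤ q.ncard
  · have hle : ({xa, xb} : Set X).ncard ≤ 2 := (Set.ncard_insert_le _ _).trans (by simp)
    obtain ⟨qb, hsqb, hqbq, hqb⟩ := Set.exists_subsuperset_card_eq hsources hle h2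
    exact ⟨qb, hqbq, hcover.trans (M.UR_ReachO_mono σ hsqb), fun _ => hqb⟩
  · exact ⟨{xa, xb}, hsources, hcover, fun h => absurd h h2⟩

theorem detTrans_of_subset_of_ncard_eq_two [Finite X] {q qb' : Set X} {σ : O}
    (hsub : qb' ⊆ M.UR (M.ReachO σ q)) (hcard : qb'.ncard = 2) : M.detTrans q σ qb' :=
  Or.inl ⟨by have := Set.ncard_le_ncard hsub; omega, hsub, hcard⟩

theorem detTrans_of_UR_ReachO_eq_singleton {q : Set X} {σ : O} {c : X}
    (h : M.UR (M.ReachO σ q) = {c}) : M.detTrans q σ {c} :=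
  Or.inr ⟨by rw [h, Set.ncard_singleton], h.symm⟩

end FSA

theorem observer_to_detector_general {X T O : Type} [Fintype X]
    (M : FSA X T O) (q q' qb' : Set X) (σ : O)
    (h : M.obsTrans q σ q') (hsub : qb' ⊆ q') (hne : qb'.Nonempty)
    (hcard : 2 ≤ q'.ncard → qb'.ncard = 2) :
    ∃ qb : Set X, qb ⊆ q ∧ M.detTrans qb σ qb' ∧ (2 ≤ q.ncard → qb.ncard = 2) := by
  obtain ⟨rfl, hq'ne⟩ := h
  by_cases h2 : 2 ≤ (M.UR (M.ReachO σ q)).ncard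
  · obtain ⟨a, b, -, rfl⟩ := Set.ncard_eq_two.mp (hcard h2)
    obtain ⟨qb, hqb, hpost, hqb2⟩ := M.exists_subset_pair_subset_UR_ReachO hsub
    exact ⟨qb, hqb, M.detTrans_of_subset_of_ncard_eq_two hpost (hcard h2), hqb2⟩
  · obtain ⟨c, hc⟩ : ∃ c, M.UR (M.ReachO σ q) = {c} := by
      have := hq'ne.ncard_pos
      exact Set.ncard_eq_one.mp (by omega)
    obtain rfl : qb' = {c} := hne.subset_singleton_iff.mp (hc ▸ hsub)
    obtain ⟨qb, hqb, hpost, hqb2⟩ :=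
      M.exists_subset_pair_subset_UR_ReachO (a := c) (b := c) (by simpa using hsub)
    have hpost_eq : M.UR (M.ReachO σ qb) = {c} :=
      ((M.UR_ReachO_mono σ hqb).trans hc.subset).antisymm (by simpa using hpost)
    exact ⟨qb, hqb, M.detTrans_of_UR_ReachO_eq_singleton hpost_eq, hqb2⟩

/-- For every observer transition `(q,σ,q') ∈ δ_obs` and every nonempty
`q̄' ⊆ q'` with `|q̄'| = 2` whenever `|q'| ≥ 2`, there is `q̄ ⊆ q` with
`(q̄,σ,q̄') ∈ δ_det`, where `|q̄| = 2` whenever `|q| ≥ 2`. -/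
theorem observer_to_detector {X T O : Type} [Fintype X] [Fintype T] [Fintype O]
    (M : FSA X T O) (q q' qb' : Set X) (σ : O)
    (h : M.obsTrans q σ q') (hsub : qb' ⊆ q') (hne : qb'.Nonempty)
    (hcard : 2 ≤ q'.ncard → qb'.ncard = 2) :
    ∃ qb : Set X, qb ⊆ q ∧ M.detTrans qb σ qb' ∧ (2 ≤ q.ncard → qb.ncard = 2) :=
  observer_to_detector_general M q q' qb' σ h hsub hne hcard
end

section
/- Let S be an FSA with detector S_det and ε-extended self-composition CC^ε_A(S), and let x1,x3,x4∈X with x3≠x4. For every transition {x1}→^σ{x3,x4} in S_det, there is a transition sequence (x1,x1)→^{s'}(x3,x4) in CC^ε_A(S) with ℓ(s')=σ. -/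
namespace FSA

variable {X T O : Type} {M : FSA X T O}

theorem CCRun.append {p q r : X × X} {s₁ s₂ : List (CEvent T)}
    (h₁ : M.CCRun p s₁ q) (h₂ : M.CCRun q s₂ r) : M.CCRun p (s₁ ++ s₂) r := by
  induction s₁ generalizing p with
  | nil => cases h₁; exact h₂
  | cons e s ih =>
    obtain ⟨m, he, hrun⟩ := h₁
    exact ⟨m, he, ih hrun⟩

theorem UnobsRun.exists_of_cons {x x' : X} {t : T} {s : List T}
    (h : M.UnobsRun x (t :: s) x') :
    ∃ y, M.delta x t y ∧ M.label t = none ∧ M.UnobsRun y s x' := by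
  obtain ⟨⟨y, hd, hr⟩, hl⟩ := h
  exact ⟨y, hd, hl t List.mem_cons_self, hr, fun u hu => hl u (List.mem_cons_of_mem t hu)⟩

theorem ccRun_map_left {a a' : X} {s : List T} (h : M.UnobsRun a s a') (b : X) :
    M.CCRun (a, b) (s.map CEvent.left) (a', b) := by
  induction s generalizing a with
  | nil => cases h.1; rfl
  | cons t s ih =>
    obtain ⟨y, hd, hl, hr⟩ := h.exists_of_cons
    exact ⟨(y, b), Or.inl ⟨hd, hl, rfl⟩, ih hr⟩

theorem ccRun_map_right {b b' : X} {s : List T} (h : M.UnobsRun b s b') (a : X) :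
    M.CCRun (a, b) (s.map CEvent.right) (a, b') := by
  induction s generalizing b with
  | nil => cases h.1; rfl
  | cons t s ih =>
    obtain ⟨y, hd, hl, hr⟩ := h.exists_of_cons
    exact ⟨(a, y), Or.inl ⟨rfl, hl, hd⟩, ih hr⟩

theorem detTrans.subset_UR_ReachO {q q' : Set X} {σ : O} (h : M.detTrans q σ q') :
    q' ⊆ M.UR (M.ReachO σ q) := by
  rcases h with ⟨-, hsub, -⟩ | ⟨-, rfl⟩
  exacts [hsub, subset_rfl]

theorem mem_UR_ReachO_singleton {x x' : X} {σ : O} :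
    x' ∈ M.UR (M.ReachO σ {x}) ↔
      ∃ y t s, M.delta x t y ∧ M.label t = some σ ∧ M.UnobsRun y s x' := by
  simp only [UR, ReachO, Set.mem_ofPred_eq, Set.mem_singleton_iff]
  constructor
  · rintro ⟨y, ⟨_, rfl, t, hd, hl⟩, s, hu⟩
    exact ⟨y, t, s, hd, hl, hu⟩
  · rintro ⟨y, t, s, hd, hl, hu⟩
    exact ⟨y, ⟨x, rfl, t, hd, hl⟩, s, hu⟩

/-- The two components make their `σ`-steps synchronously, then complete their unobservable
tails one after the other. -/
theorem exists_ccRun_of_mem_UR_ReachO {x₁ x₂ x₃ x₄ : X} {σ : O}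
    (h₃ : x₃ ∈ M.UR (M.ReachO σ {x₁})) (h₄ : x₄ ∈ M.UR (M.ReachO σ {x₂})) :
    ∃ s', M.CCRun (x₁, x₂) s' (x₃, x₄) ∧ M.ccLabelSeq s' = [σ] := by
  obtain ⟨y₃, t₃, s₃, hd₃, hl₃, hu₃⟩ := mem_UR_ReachO_singleton.1 h₃
  obtain ⟨y₄, t₄, s₄, hd₄, hl₄, hu₄⟩ := mem_UR_ReachO_singleton.1 h₄
  refine ⟨CEvent.both t₃ t₄ :: (s₃.map CEvent.left ++ s₄.map CEvent.right), ?_, ?_⟩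
  · exact ⟨(y₃, y₄), Or.inl ⟨hd₃, hd₄, σ, hl₃, hl₄⟩,
      (ccRun_map_left hu₃ y₄).append (ccRun_map_right hu₄ x₃)⟩
  · simp [ccLabelSeq, cLabel, hl₃, List.filterMap_map, Function.comp_def]

end FSA

theorem detector_to_cc_one_two_general {X T O : Type}
    (M : FSA X T O) (x1 x3 x4 : X) (σ : O)
    (h : M.detTrans {x1} σ {x3, x4}) :
    ∃ s' : List (CEvent T),
      M.CCRun (x1, x1) s' (x3, x4) ∧ M.ccLabelSeq s' = [σ] := by
  have hsub := h.subset_UR_ReachO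
  exact FSA.exists_ccRun_of_mem_UR_ReachO (hsub (by simp)) (hsub (by simp))

/-- For states `x3 ≠ x4`, every detector transition `{x1} →^σ {x3,x4}`
yields a transition sequence `(x1,x1) →^{s'} (x3,x4)` in `CC^ε_A(S)` with `ℓ(s') = σ`. -/
theorem detector_to_cc_one_two {X T O : Type} [Fintype X] [Fintype T] [Fintype O]
    (M : FSA X T O) (x1 x3 x4 : X) (σ : O)
    (h34 : x3 ≠ x4)
    (h : M.detTrans {x1} σ {x3, x4}) :
    ∃ s' : List (CEvent T),
      M.CCRun (x1, x1) s' (x3, x4) ∧ M.ccLabelSeq s' = [σ] :=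
  detector_to_cc_one_two_general M x1 x3 x4 σ h
end

section
/- Let S be an FSA with detector S_det and ε-extended self-composition CC^ε_A(S), and let x1,x3∈X. For every transition {x1}→^σ{x3} in S_det, there is a transition sequence (x1,x1)→^{s'}(x3,x3) in CC^ε_A(S) with ℓ(s')=σ. -/
/-!
A detector transition `{x1} →^σ {x3}` puts `x3` in `UR(Reach_σ({x1}))`, i.e. there is a run
`x1 →^t x2 →^s x3` with `ℓ(t) = σ` and `s` unobservable. The self-composition follows it on the
diagonal: the synchronized event `(t, t)`, then each unobservable `u ∈ s` as `(u, ε)` followed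
by `(ε, u)`.
-/

namespace FSA

variable {X T O : Type} (M : FSA X T O)

theorem mem_UR_ReachO_of_detTrans_singleton {q : Set X} {σ : O} {x : X}
    (h : M.detTrans q σ {x}) : x ∈ M.UR (M.ReachO σ q) := by
  rcases h with ⟨_, hsub, _⟩ | ⟨_, heq⟩
  · exact hsub rfl
  · exact heq ▸ rfl

def diagLift (s : List T) : List (CEvent T) :=
  s.flatMap fun u => [CEvent.left u, CEvent.right u]

theorem ccLabelSeq_diagLift (s : List T) : M.ccLabelSeq (diagLift s) = [] := by
  induction s with
  | nil => rfl
  | cons u s ih => simpa [diagLift, ccLabelSeq, cLabel] using ih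

theorem ccRun_diagLift_of_unobsRun {x x' : X} {s : List T} (h : M.UnobsRun x s x') :
    M.CCRun (x, x) (diagLift s) (x', x') := by
  induction s generalizing x with
  | nil => exact congrArg (fun y => (y, y)) h.1
  | cons u s ih =>
    obtain ⟨⟨y, hstep, hrun⟩, hunobs⟩ := h
    have hu : M.label u = none := hunobs u List.mem_cons_self
    exact ⟨(y, x), Or.inl ⟨hstep, hu, rfl⟩, (y, y), Or.inl ⟨rfl, hu, hstep⟩,
      ih ⟨hrun, fun t ht => hunobs t (List.mem_cons_of_mem u ht)⟩⟩

end FSA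

theorem detector_to_cc_one_one_general {X T O : Type}
    (M : FSA X T O) (x1 x3 : X) (σ : O)
    (h : M.detTrans {x1} σ {x3}) :
    ∃ s' : List (CEvent T),
      M.CCRun (x1, x1) s' (x3, x3) ∧ M.ccLabelSeq s' = [σ] := by
  obtain ⟨x2, ⟨_, rfl, t, hstep, hlabel⟩, s, hunobs⟩ :=
    M.mem_UR_ReachO_of_detTrans_singleton h
  refine ⟨CEvent.both t t :: FSA.diagLift s,
    ⟨(x2, x2), Or.inl ⟨hstep, hstep, σ, hlabel, hlabel⟩,
      M.ccRun_diagLift_of_unobsRun hunobs⟩, ?_⟩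
  simp only [FSA.ccLabelSeq, List.filterMap_cons, FSA.cLabel, hlabel]
  exact congrArg (σ :: ·) (M.ccLabelSeq_diagLift s)

/-- Every detector transition `{x1} →^σ {x3}` yields a transition
sequence `(x1,x1) →^{s'} (x3,x3)` in `CC^ε_A(S)` with `ℓ(s') = σ`. -/
theorem detector_to_cc_one_one {X T O : Type} [Fintype X] [Fintype T] [Fintype O]
    (M : FSA X T O) (x1 x3 : X) (σ : O)
    (h : M.detTrans {x1} σ {x3}) :
    ∃ s' : List (CEvent T),
      M.CCRun (x1, x1) s' (x3, x3) ∧ M.ccLabelSeq s' = [σ] :=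
  detector_to_cc_one_one_general M x1 x3 σ h
end

section
/- Let S be an FSA with observer S_obs and ε-extended self-composition CC^ε_A(S). Consider a transition sequence x0'→^{s0'}x1'→^{t1'}x2'→^{s1'}⋯→^{tn'}x_{2n}'→^{sn'}x_{2n+1}' in CC^ε_A(S), where x0'∈X0', the s_i' are finite sequences of unobservable composed events (including ε), and the t_i' are observable composed events. For each i∈{0,…,n}, let q_i be the union of all components of the states of X×X visited along the segment x_{2i}'→^{s_i'}x_{2i+1}'. Then for every i∈{1,…,n} there exists q̄_i ⊇ q_i such that M(S,ε)→^{ℓ(t1')}q̄1→^{ℓ(t2')}⋯→^{ℓ(tn')}q̄n is a transition sequence of the observer S_obs. -/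
/-!
Every state visited in the `i`-th unobservable segment has both components in the `i`-th
state of the observer run. Observer states are `UR`-sets, hence closed under unobservable
transitions of `S`, and an unobservable composed step moves one component along such a
transition (or, for an added `ε`, copies one component onto the other), so it stays inside.
An observable composed step `(t, t')` moves each component along an event labelled `σ`,
hence into `Reach_σ` of the previous observer state. The run itself then witnesses that every
observer state is nonempty.
-/

namespace FSA

variable {X T O : Type} (M : FSA X T O)

theorem run_append_s9 {x y w : X} {s s' : List T} (h : M.Run x s y) (h' : M.Run y s' w) :
    M.Run x (s ++ s') w := by
  induction s generalizing x with
  | nil => exact (show x = y from h) ▸ h'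
  | cons a s ih =>
    obtain ⟨x₁, hstep, hrun⟩ := h
    exact ⟨x₁, hstep, ih hrun⟩

def UnobsClosed (q : Set X) : Prop :=
  ∀ ⦃x t x'⦄, x ∈ q → M.delta x t x' → M.label t = none → x' ∈ q

theorem subset_UR (q : Set X) : q ⊆ M.UR q :=
  fun x hx => ⟨x, hx, [], rfl, by simp⟩

theorem unobsClosed_UR (q : Set X) : M.UnobsClosed (M.UR q) := by
  rintro x t x' ⟨x₀, hx₀, s, hrun, hlabel⟩ hstep ht
  refine ⟨x₀, hx₀, s ++ [t], M.run_append_s9 hrun ⟨x', hstep, rfl⟩, ?_⟩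
  simpa [or_imp, forall_and] using ⟨hlabel, ht⟩

/-- Added `ε`-transitions go to `(x₁, x₁)` or `(x₂, x₂)`, so they cannot leave
`q ×ˢ q`. -/
theorem ccEpsTrans_mem_prod_of_cLabel_eq_none {q : Set X} (hq : M.UnobsClosed q)
    {p p' : X × X} {ev : CEvent T} (h : M.ccEpsTrans p ev p') (hev : M.cLabel ev = none)
    (hp : p ∈ q ×ˢ q) : p' ∈ q ×ˢ q := by
  rcases h with h | ⟨rfl, -, rfl | rfl, -⟩
  · cases ev with
    | both a b =>
      obtain ⟨-, -, τ, ha, -⟩ := h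
      simp [cLabel, ha] at hev
    | left a => exact ⟨hq hp.1 h.1 h.2.1, h.2.2 ▸ hp.2⟩
    | right a => exact ⟨h.1 ▸ hp.1, hq hp.2 h.2.2 h.2.1⟩
    | eps => exact h.elim
  · exact ⟨hp.1, hp.1⟩
  · exact ⟨hp.2, hp.2⟩

theorem ccEpsTrans_mem_prod_ReachO {q : Set X} {p p' : X × X} {ev : CEvent T} {σ : O}
    (h : M.ccEpsTrans p ev p') (hev : M.cLabel ev = some σ) (hp : p ∈ q ×ˢ q) :
    p' ∈ M.ReachO σ q ×ˢ M.ReachO σ q := by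
  rcases h with h | ⟨rfl, -⟩
  · cases ev with
    | both a b =>
      obtain ⟨ha, hb, τ, hτa, hτb⟩ := h
      have hτ : τ = σ := Option.some_injective _ (hτa.symm.trans hev)
      subst hτ
      exact ⟨⟨p.1, hp.1, a, ha, hτa⟩, ⟨p.2, hp.2, b, hb, hτb⟩⟩
    | left a => simp [cLabel] at hev
    | right a => simp [cLabel] at hev
    | eps => exact h.elim
  · simp [cLabel] at hev

theorem unobs_path_mem_prod {q : Set X} (hq : M.UnobsClosed q) {m : ℕ}
    {z : Fin (m + 1) → X × X} {e : Fin m → CEvent T}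
    (hpath : ∀ j : Fin m,
      M.ccEpsTrans (z j.castSucc) (e j) (z j.succ) ∧ M.cLabel (e j) = none)
    (h₀ : z 0 ∈ q ×ˢ q) (j : Fin (m + 1)) : z j ∈ q ×ˢ q := by
  induction j using Fin.induction with
  | zero => exact h₀
  | succ j ih => exact M.ccEpsTrans_mem_prod_of_cLabel_eq_none hq (hpath j).1 (hpath j).2 ih

/-- The observer states along the word `σ`; unlike `obsTrans`, this does not require them
to be nonempty. -/
def obsStates {n : ℕ} (σ : Fin n → O) : Fin (n + 1) → Set X :=
  Fin.induction (motive := fun _ => Set X) M.obsInit fun i q => M.UR (M.ReachO (σ i) q)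

theorem obsStates_zero {n : ℕ} (σ : Fin n → O) : M.obsStates σ 0 = M.obsInit := rfl

theorem obsStates_succ {n : ℕ} (σ : Fin n → O) (i : Fin n) :
    M.obsStates σ i.succ = M.UR (M.ReachO (σ i) (M.obsStates σ i.castSucc)) :=
  Fin.induction_succ _ _ i

theorem unobsClosed_obsStates {n : ℕ} (σ : Fin n → O) (i : Fin (n + 1)) :
    M.UnobsClosed (M.obsStates σ i) := by
  cases i using Fin.cases with
  | zero => exact M.unobsClosed_UR _
  | succ i => rw [obsStates_succ]; exact M.unobsClosed_UR _

theorem cc_path_mem_obsStates {n : ℕ} {L : Fin (n + 1) → ℕ}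
    {z : (i : Fin (n + 1)) → Fin (L i + 1) → X × X}
    {e : (i : Fin (n + 1)) → Fin (L i) → CEvent T}
    {t : Fin n → CEvent T} {σ : Fin n → O}
    (hinit : z 0 0 ∈ M.init ×ˢ M.init)
    (hseg : ∀ (i : Fin (n + 1)) (j : Fin (L i)),
      M.ccEpsTrans (z i j.castSucc) (e i j) (z i j.succ) ∧ M.cLabel (e i j) = none)
    (hobs : ∀ i : Fin n, M.cLabel (t i) = some (σ i) ∧
      M.ccEpsTrans (z i.castSucc (Fin.last (L i.castSucc))) (t i) (z i.succ 0))
    (i : Fin (n + 1)) (j : Fin (L i + 1)) :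
    z i j ∈ M.obsStates σ i ×ˢ M.obsStates σ i := by
  induction i using Fin.induction with
  | zero =>
    refine M.unobs_path_mem_prod (M.unobsClosed_obsStates σ 0) (hseg 0) ?_ j
    exact Set.prod_mono (M.subset_UR _) (M.subset_UR _) hinit
  | succ i ih =>
    refine M.unobs_path_mem_prod (M.unobsClosed_obsStates σ _) (hseg _) ?_ j
    rw [obsStates_succ]
    exact Set.prod_mono (M.subset_UR _) (M.subset_UR _)
      (M.ccEpsTrans_mem_prod_ReachO (hobs i).2 (hobs i).1 (ih _))

end FSA

theorem cc_run_to_observer_run_general {X T O : Type}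
    (M : FSA X T O) (n : ℕ)
    (L : Fin (n + 1) → ℕ)
    (z : (i : Fin (n + 1)) → Fin (L i + 1) → X × X)
    (e : (i : Fin (n + 1)) → Fin (L i) → CEvent T)
    (t : Fin n → CEvent T) (σ : Fin n → O)
    (hinit : (z 0 0).1 ∈ M.init ∧ (z 0 0).2 ∈ M.init)
    (hseg : ∀ (i : Fin (n + 1)) (j : Fin (L i)),
      M.ccEpsTrans (z i j.castSucc) (e i j) (z i j.succ) ∧ M.cLabel (e i j) = none)
    (hobs : ∀ i : Fin n, M.cLabel (t i) = some (σ i) ∧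
      M.ccEpsTrans (z i.castSucc (Fin.last (L i.castSucc))) (t i) (z i.succ 0)) :
    ∃ qb : Fin (n + 1) → Set X,
      qb 0 = M.obsInit ∧
      (∀ i : Fin n, M.obsTrans (qb i.castSucc) (σ i) (qb i.succ)) ∧
      ∀ i : Fin n,
        {a : X | ∃ j : Fin (L i.succ + 1), a = (z i.succ j).1 ∨ a = (z i.succ j).2}
          ⊆ qb i.succ := by
  have hmem := M.cc_path_mem_obsStates hinit hseg hobs
  refine ⟨M.obsStates σ, M.obsStates_zero σ,
    fun i => ⟨M.obsStates_succ σ i, _, (hmem i.succ 0).1⟩, ?_⟩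
  rintro i a ⟨j, rfl | rfl⟩
  exacts [(hmem i.succ j).1, (hmem i.succ j).2]

/-- Consider a transition sequence
`x0' →^{s0'} x1' →^{t1'} x2' →^{s1'} ⋯ →^{tn'} x_{2n}' →^{sn'} x_{2n+1}'` in
`CC^ε_A(S)` starting in `X0' = X0 × X0`, where the `i`-th unobservable segment is the
path `z i 0, …, z i (L i)` with unobservable composed events `e i` and the observable
composed events are `t i` with labels `σ i`. Let `q_i` be the union of all components
of the states visited along the `i`-th segment. Then there are sets `q̄_i ⊇ q_i`
(`i = 1, …, n`) such that `M(S,ε) →^{σ 1} q̄_1 →^{σ 2} ⋯ →^{σ n} q̄_n` is a transition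
sequence of the observer `S_obs`. -/
theorem cc_run_to_observer_run {X T O : Type} [Fintype X] [Fintype T] [Fintype O]
    (M : FSA X T O) (n : ℕ)
    (L : Fin (n + 1) → ℕ)
    (z : (i : Fin (n + 1)) → Fin (L i + 1) → X × X)
    (e : (i : Fin (n + 1)) → Fin (L i) → CEvent T)
    (t : Fin n → CEvent T) (σ : Fin n → O)
    (hinit : (z 0 0).1 ∈ M.init ∧ (z 0 0).2 ∈ M.init)
    (hseg : ∀ (i : Fin (n + 1)) (j : Fin (L i)),
      M.ccEpsTrans (z i j.castSucc) (e i j) (z i j.succ) ∧ M.cLabel (e i j) = none)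
    (hobs : ∀ i : Fin n, M.cLabel (t i) = some (σ i) ∧
      M.ccEpsTrans (z i.castSucc (Fin.last (L i.castSucc))) (t i) (z i.succ 0)) :
    ∃ qb : Fin (n + 1) → Set X,
      qb 0 = M.obsInit ∧
      (∀ i : Fin n, M.obsTrans (qb i.castSucc) (σ i) (qb i.succ)) ∧
      ∀ i : Fin n,
        {a : X | ∃ j : Fin (L i.succ + 1), a = (z i.succ j).1 ∨ a = (z i.succ j).2}
          ⊆ qb i.succ :=
  cc_run_to_observer_run_general M n L z e t σ hinit hseg hobs
end
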